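/- The Cayley graph of the group H₃₂ = ⟨a, b, c | a⁴ = b⁴ = c² = 1, [a,b] = c, [c,a] = [c,b] = 1⟩ of order 32 with connection set {ba, b⁻¹a⁻¹c, b, b⁻¹} has 2√2 as an eigenvalue; in particular, H₃₂ admits a non-integral Cayley graph with connection set of size 4. -/

import Mathlib

/-- The Cayley graph of a group `G` with connection set `S`. For a symmetric set `S`
with `1 ∉ S`, `g` and `h` are adjacent iff `h * g⁻¹ ∈ S`. -/
def cayley {G : Type*} [Group G] (S : Set G) : SimpleGraph G :=
  SimpleGraph.fromRel (fun g h => h * g⁻¹ ∈ S)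

/-- A finite graph is integral if all eigenvalues of its adjacency matrix are integers. -/
def IsIntegralGraph {V : Type*} [Finite V] (Γ : SimpleGraph V) : Prop :=
  letI := Fintype.ofFinite V
  letI := Classical.decEq V
  letI : DecidableRel Γ.Adj := Classical.decRel _
  ∀ μ ∈ spectrum ℝ (Γ.adjMatrix ℝ), ∃ z : ℤ, (z : ℝ) = μ

/-- `μ` is an eigenvalue of the adjacency matrix of the finite graph `Γ`. -/
def IsAdjEigenvalue {V : Type*} [Finite V] (Γ : SimpleGraph V) (μ : ℝ) : Prop :=
  letI := Fintype.ofFinite V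
  letI := Classical.decEq V
  letI : DecidableRel Γ.Adj := Classical.decRel _
  μ ∈ spectrum ℝ (Γ.adjMatrix ℝ)

open scoped commutatorElement

/-!
The relations pin `G` down: `c` is central of order 2 and `a ^ k * b ^ j = c ^ (k * j) * b ^ j * a ^ k`,
so every element is `c ^ i * b ^ j * a ^ k` with `i < 2`, `j, k < 4`, and this normal form with
its product rule is a concrete group of order 32 mapping onto `G`, hence isomorphic to it.
Cayley graphs of isomorphic groups are isomorphic, so the spectrum can be computed in the model,
where the adjacency operator is `f ↦ (x ↦ ∑ s ∈ S, f (s * x))`. There one checks integer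
functions `p`, `q` with `A p = 4 q` and `A q = 2 p`; then `p + √2 q` is an eigenvector for the
irrational eigenvalue `2√2`.
-/

open scoped Matrix

theorem isAdjEigenvalue_iff {V : Type*} [Fintype V] [DecidableEq V] {Γ : SimpleGraph V}
    [DecidableRel Γ.Adj] {μ : ℝ} :
    IsAdjEigenvalue Γ μ ↔ μ ∈ spectrum ℝ (Γ.adjMatrix ℝ) := by
  unfold IsAdjEigenvalue
  convert Iff.rfl

theorem SimpleGraph.Iso.isAdjEigenvalue_iff {V W : Type*} [Finite V] [Finite W]
    {Γ : SimpleGraph V} {Δ : SimpleGraph W} (e : Γ ≃g Δ) {μ : ℝ} :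
    IsAdjEigenvalue Γ μ ↔ IsAdjEigenvalue Δ μ := by
  classical
  have := Fintype.ofFinite V
  have := Fintype.ofFinite W
  rw [_root_.isAdjEigenvalue_iff, _root_.isAdjEigenvalue_iff, ← e.reindex_adjMatrix (α := ℝ),
    ← Matrix.coe_reindexAlgEquiv ℝ ℝ, AlgEquiv.spectrum_eq]

theorem not_isIntegralGraph_of_isAdjEigenvalue {V : Type*} [Finite V] {Γ : SimpleGraph V}
    {μ : ℝ} (hΓ : IsAdjEigenvalue Γ μ) (hμ : Irrational μ) : ¬ IsIntegralGraph Γ := fun hint =>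
  let ⟨z, hz⟩ := hint μ hΓ
  hμ ⟨z, by simpa using hz⟩

theorem Matrix.mem_spectrum_of_mulVec_eq_smul {n R : Type*} [Fintype n] [DecidableEq n]
    [CommRing R] {A : Matrix n n R} {μ : R} {v : n → R} (hv : v ≠ 0) (h : A *ᵥ v = μ • v) :
    μ ∈ spectrum R A := by
  rw [← Matrix.spectrum_toLin']
  exact Module.End.hasEigenvalue_of_hasEigenvector
    ⟨Module.End.mem_eigenspace_iff.2 (by simpa using h), hv⟩ |>.mem_spectrum

section Cayley

variable {G : Type*} [Group G]

theorem cayley_adj_iff {S : Set G} (hS : ∀ s ∈ S, s⁻¹ ∈ S) (h1 : (1 : G) ∉ S) {g h : G} :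
    (cayley S).Adj g h ↔ h * g⁻¹ ∈ S := by
  have hsymm : g * h⁻¹ ∈ S ↔ h * g⁻¹ ∈ S := by
    constructor <;> intro hmem <;> simpa using hS _ hmem
  rw [cayley, SimpleGraph.fromRel_adj, hsymm, or_self]
  refine ⟨And.right, fun hmem => ⟨?_, hmem⟩⟩
  rintro rfl
  exact h1 (by simpa using hmem)

def cayleyIsoOfMulEquiv {H : Type*} [Group H] (e : G ≃* H) (S : Set G) :
    cayley S ≃g cayley (e '' S) where
  toEquiv := e.toEquiv
  map_rel_iff' {x y} := by
    simp only [cayley, SimpleGraph.fromRel_adj, MulEquiv.toEquiv_eq_coe, EquivLike.coe_coe,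
      ← map_inv, ← map_mul, e.injective.mem_set_image, e.injective.ne_iff]

theorem cayley_adjMatrix_mulVec [Fintype G] [DecidableEq G] {R : Type*} [NonAssocSemiring R]
    {S : Finset G} (hS : ∀ s ∈ S, s⁻¹ ∈ S) (h1 : (1 : G) ∉ S)
    [DecidableRel (cayley (S : Set G)).Adj] (f : G → R) (g : G) :
    ((cayley (S : Set G)).adjMatrix R *ᵥ f) g = ∑ s ∈ S, f (s * g) := by
  have hadj (s : G) : (cayley (S : Set G)).Adj g (s * g) ↔ s ∈ S := by
    rw [cayley_adj_iff (by simpa using hS) (by simpa using h1), mul_inv_cancel_right,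
      Finset.mem_coe]
  rw [Matrix.mulVec, dotProduct, ← Equiv.sum_comp (Equiv.mulRight g)]
  simp only [Equiv.coe_mulRight, SimpleGraph.adjMatrix_apply, hadj, ite_mul, one_mul, zero_mul]
  exact Fintype.sum_ite_mem S _

end Cayley

section Relations

variable {G : Type*} [Group G] {a b c : G}

theorem semiconjBy_of_commutatorElement_eq (h : ⁅a, b⁆ = c) : SemiconjBy a b (c * b) := by
  rw [SemiconjBy, ← h, commutatorElement_def]
  group

theorem SemiconjBy.pow_pow_of_commute (h : SemiconjBy a b (c * b)) (hca : Commute c a)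
    (hcb : Commute c b) (m n : ℕ) : SemiconjBy (a ^ m) (b ^ n) (c ^ (m * n) * b ^ n) := by
  have hn : SemiconjBy a (b ^ n) (c ^ n * b ^ n) := hcb.mul_pow n ▸ h.pow_right n
  induction m with
  | zero => simp
  | succ m ih =>
    have hstep : SemiconjBy a (c ^ (m * n) * b ^ n) (c ^ ((m + 1) * n) * b ^ n) := by
      rw [add_one_mul, pow_add, mul_assoc]
      exact SemiconjBy.mul_right (hca.symm.pow_right _) hn
    rw [pow_succ']
    exact hstep.mul_left ih

theorem pow_zmod_val_natCast {x : G} {n : ℕ} [NeZero n] (hx : x ^ n = 1) (m : ℕ) :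
    x ^ (m : ZMod n).val = x ^ m := by
  rw [ZMod.val_natCast, ← pow_eq_pow_mod m hx]

theorem pow_mul_pow_mul_pow_mul_eq (hab : SemiconjBy a b (c * b)) (hca : Commute c a)
    (hcb : Commute c b) (i₁ j₁ k₁ i₂ j₂ k₂ : ℕ) :
    c ^ i₁ * (b ^ j₁ * a ^ k₁) * (c ^ i₂ * (b ^ j₂ * a ^ k₂)) =
      c ^ (i₁ + i₂ + k₁ * j₂) * (b ^ (j₁ + j₂) * a ^ (k₁ + k₂)) := by
  have key : a ^ k₁ * b ^ j₂ = c ^ (k₁ * j₂) * b ^ j₂ * a ^ k₁ :=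
    (hab.pow_pow_of_commute hca hcb k₁ j₂).eq
  have h₁ : Commute (c ^ i₂) (b ^ j₁ * a ^ k₁) := (hcb.pow_pow _ _).mul_right (hca.pow_pow _ _)
  have h₂ : Commute (c ^ (k₁ * j₂)) (b ^ j₁) := hcb.pow_pow _ _
  calc c ^ i₁ * (b ^ j₁ * a ^ k₁) * (c ^ i₂ * (b ^ j₂ * a ^ k₂))
      = c ^ i₁ * (b ^ j₁ * a ^ k₁ * c ^ i₂) * (b ^ j₂ * a ^ k₂) := by simp only [mul_assoc]
    _ = c ^ i₁ * c ^ i₂ * (b ^ j₁ * (a ^ k₁ * b ^ j₂) * a ^ k₂) := by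
      rw [← h₁.eq]; simp only [mul_assoc]
    _ = c ^ i₁ * c ^ i₂ * (b ^ j₁ * c ^ (k₁ * j₂) * b ^ j₂ * a ^ k₁ * a ^ k₂) := by
      rw [key]; simp only [mul_assoc]
    _ = c ^ (i₁ + i₂ + k₁ * j₂) * (b ^ (j₁ + j₂) * a ^ (k₁ + k₂)) := by
      rw [← h₂.eq]; simp only [pow_add, mul_assoc]

end Relations

/-- `⟨i, j, k⟩` stands for `c ^ i * b ^ j * a ^ k`. -/
structure H32 where
  i : ZMod 2
  j : ZMod 4
  k : ZMod 4
  deriving DecidableEq, Fintype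

namespace H32

def castTwo : ZMod 4 →+* ZMod 2 := ZMod.castHom (by norm_num) _

instance : Mul H32 := ⟨fun x y => ⟨x.i + y.i + castTwo x.k * castTwo y.j, x.j + y.j, x.k + y.k⟩⟩
instance : One H32 := ⟨⟨0, 0, 0⟩⟩
instance : Inv H32 := ⟨fun x => ⟨x.i + castTwo x.k * castTwo x.j, -x.j, -x.k⟩⟩

theorem mul_def (x y : H32) :
    x * y = ⟨x.i + y.i + castTwo x.k * castTwo y.j, x.j + y.j, x.k + y.k⟩ := rfl
theorem one_def : (1 : H32) = ⟨0, 0, 0⟩ := rfl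
theorem inv_def (x : H32) : x⁻¹ = ⟨x.i + castTwo x.k * castTwo x.j, -x.j, -x.k⟩ := rfl

instance : Group H32 where
  mul_assoc x y z := by
    simp only [mul_def, map_add, mk.injEq]
    exact ⟨by ring, add_assoc _ _ _, add_assoc _ _ _⟩
  one_mul x := by simp [mul_def, one_def]
  mul_one x := by simp [mul_def, one_def]
  inv_mul_cancel x := by
    simp only [inv_def, mul_def, map_neg, one_def, mk.injEq, neg_add_cancel, and_true]
    linear_combination CharTwo.add_self_eq_zero x.i

def a : H32 := ⟨0, 0, 1⟩
def b : H32 := ⟨0, 1, 0⟩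
def c : H32 := ⟨1, 0, 0⟩

theorem card_eq : Nat.card H32 = 32 := by
  rw [Nat.card_eq_fintype_card]
  rfl

theorem mul_eq_natCast (x y : H32) : x * y =
    ⟨(x.i.val + y.i.val + x.k.val * y.j.val : ℕ), (x.j.val + y.j.val : ℕ),
      (x.k.val + y.k.val : ℕ)⟩ := by
  rw [mul_def]
  push_cast
  simp only [ZMod.natCast_val, ZMod.cast_id', id, castTwo, ZMod.castHom_apply]

section Lift

variable {G : Type*} [Group G] {a b c : G}

def lift (ha : a ^ 4 = 1) (hb : b ^ 4 = 1) (hc : c ^ 2 = 1) (hab : SemiconjBy a b (c * b))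
    (hca : Commute c a) (hcb : Commute c b) : H32 →* G :=
  MonoidHom.mk' (fun x => c ^ x.i.val * (b ^ x.j.val * a ^ x.k.val)) fun x y => by
    rw [mul_eq_natCast, pow_zmod_val_natCast hc, pow_zmod_val_natCast hb,
      pow_zmod_val_natCast ha, pow_mul_pow_mul_pow_mul_eq hab hca hcb]

theorem exists_mulEquiv [Finite G] (hcard : Nat.card G = 32) (ha : a ^ 4 = 1) (hb : b ^ 4 = 1)
    (hc : c ^ 2 = 1) (hab : SemiconjBy a b (c * b)) (hca : Commute c a) (hcb : Commute c b)
    (hgen : Subgroup.closure {a, b} = ⊤) :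
    ∃ e : H32 ≃* G, e H32.a = a ∧ e H32.b = b ∧ e H32.c = c := by
  set f := lift ha hb hc hab hca hcb
  have hfa : f H32.a = a := by simp [f, lift, H32.a, ZMod.val_one_eq_one_mod]
  have hfb : f H32.b = b := by simp [f, lift, H32.b, ZMod.val_one_eq_one_mod]
  have hfc : f H32.c = c := by simp [f, lift, H32.c, ZMod.val_one_eq_one_mod]
  have hsurj : Function.Surjective f := by
    rw [← MonoidHom.range_eq_top, eq_top_iff, ← hgen, Subgroup.closure_le]
    rintro _ (rfl | rfl)
    exacts [⟨_, hfa⟩, ⟨_, hfb⟩]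
  have hbij := (Nat.bijective_iff_surjective_and_card f).2 ⟨hsurj, by rw [card_eq, hcard]⟩
  exact ⟨MulEquiv.ofBijective f hbij, hfa, hfb, hfc⟩

end Lift

def connectionSet : Finset H32 := {b * a, b⁻¹ * a⁻¹ * c, b, b⁻¹}

theorem inv_mem_connectionSet : ∀ s ∈ connectionSet, s⁻¹ ∈ connectionSet := by decide

theorem one_notMem_connectionSet : (1 : H32) ∉ connectionSet := by decide

def sign (x : H32) : ℤ := if x.i + castTwo x.k * castTwo x.j = 0 then 1 else -1

def p (x : H32) : ℤ := sign x * ![1, 1, -1, -1] x.k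

def q (x : H32) : ℤ := sign x * ![0, -1, 0, 1] x.k

theorem sum_connectionSet_p : ∀ x, ∑ s ∈ connectionSet, p (s * x) = 4 * q x := by decide

theorem sum_connectionSet_q : ∀ x, ∑ s ∈ connectionSet, q (s * x) = 2 * p x := by decide

theorem isAdjEigenvalue_cayley_connectionSet :
    IsAdjEigenvalue (cayley (connectionSet : Set H32)) (2 * √2) := by
  classical
  rw [isAdjEigenvalue_iff]
  refine Matrix.mem_spectrum_of_mulVec_eq_smul (v := fun x => (p x : ℝ) + √2 * q x) ?_ ?_
  · intro h
    simpa [p, q, sign, one_def] using congrFun h 1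
  · funext x
    have hp : ∑ s ∈ connectionSet, (p (s * x) : ℝ) = 4 * q x := by
      exact_mod_cast sum_connectionSet_p x
    have hq : ∑ s ∈ connectionSet, (q (s * x) : ℝ) = 2 * p x := by
      exact_mod_cast sum_connectionSet_q x
    rw [cayley_adjMatrix_mulVec inv_mem_connectionSet one_notMem_connectionSet,
      Finset.sum_add_distrib, ← Finset.mul_sum, hp, hq, Pi.smul_apply, smul_eq_mul]
    linear_combination (-2 * q x : ℝ) * Real.sq_sqrt (zero_le_two : (0 : ℝ) ≤ 2)

end H32

theorem H32_cayley_not_integral (G : Type*) [Group G] [Finite G]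
    (hcard : Nat.card G = 32)
    (a b c : G) (ha : a ^ 4 = 1) (hb : b ^ 4 = 1) (hc : c ^ 2 = 1)
    (hab : ⁅a, b⁆ = c) (hca : ⁅c, a⁆ = 1) (hcb : ⁅c, b⁆ = 1)
    (hgen : Subgroup.closure {a, b} = ⊤) :
    IsAdjEigenvalue (cayley ({b * a, b⁻¹ * a⁻¹ * c, b, b⁻¹} : Set G)) (2 * Real.sqrt 2) ∧
      ¬ IsIntegralGraph (cayley ({b * a, b⁻¹ * a⁻¹ * c, b, b⁻¹} : Set G)) := by
  obtain ⟨e, ea, eb, ec⟩ := H32.exists_mulEquiv hcard ha hb hc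
    (semiconjBy_of_commutatorElement_eq hab) (commutatorElement_eq_one_iff_commute.1 hca)
    (commutatorElement_eq_one_iff_commute.1 hcb) hgen
  have hS : e '' H32.connectionSet = {b * a, b⁻¹ * a⁻¹ * c, b, b⁻¹} := by
    simp [H32.connectionSet, Set.image_insert_eq, ea, eb, ec]
  have hμ : IsAdjEigenvalue (cayley ({b * a, b⁻¹ * a⁻¹ * c, b, b⁻¹} : Set G)) (2 * √2) :=
    hS ▸ (cayleyIsoOfMulEquiv e _).isAdjEigenvalue_iff.1 H32.isAdjEigenvalue_cayley_connectionSet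
  have hirr : Irrational (2 * √2) := by simpa using irrational_sqrt_two.natCast_mul two_ne_zero
  exact ⟨hμ, not_isIntegralGraph_of_isAdjEigenvalue hμ hirr⟩
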